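/- For every nonnegative integer k and every integer r ≥ 1 there exist polynomials P_{k,0}(q), …, P_{k,rk}(q) with integer coefficients such that, in ℚ(q), for all nonnegative integers n: ([n,k])^r = Σ_{j=0}^{r·k} P_{k,j}(q)·[n,j]. -/

import Mathlib

/-- The $q$-factorial `(q)_n = (1-q)(1-q²)⋯(1-qⁿ)` in `ℚ(q) = RatFunc ℚ`. -/
noncomputable def qfac (n : ℕ) : RatFunc ℚ :=
  ∏ m ∈ Finset.range n, (1 - (RatFunc.X : RatFunc ℚ) ^ (m + 1))

/-- The Gaussian binomial coefficient `[n, k]` in `ℚ(q)`. -/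
noncomputable def qbinom (n k : ℕ) : RatFunc ℚ :=
  if k ≤ n then qfac n / (qfac k * qfac (n - k)) else 0

/-- The $q$-multinomial coefficient `Mq(j; i, k)` in `ℚ(q)`: it equals
`(q)_j/((q)_{j-i}(q)_{j-k}(q)_{i+k-j})` when `max i k ≤ j ≤ i + k`, and `0`
otherwise. -/
noncomputable def qmulti (j i k : ℕ) : RatFunc ℚ :=
  if i ≤ j ∧ k ≤ j ∧ j ≤ i + k then
    qfac j / (qfac (j - i) * qfac (j - k) * qfac (i + k - j))
  else 0

/-!
Gaussian binomials are polynomials in `q` with integer coefficients (Pascal's rule), and the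
product of two of them expands in the Gaussian binomial basis with such coefficients:
writing `n = j + m` and applying the `q`-Vandermonde identity to `[j + m, k]`, the relation
`[j + m, j] [m, a] = [j + m, j + a] [j + a, j]` gives
`[n, j] [n, k] = ∑_{a + b = k} q^{a (j - b)} [j + a, j] [j, b] [n, j + a]`.
Multiplying by `[n, k]` thus raises the degree of an integral combination of `[n, 0], …, [n, d]`
by `k`, and induction on `r` finishes.
-/

open Finset Polynomial

local notation "q" => (RatFunc.X : RatFunc ℚ)

lemma one_sub_X_pow_succ_ne_zero (m : ℕ) : 1 - q ^ (m + 1) ≠ 0 := by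
  have h : (X ^ (m + 1) - C 1 : ℚ[X]) ≠ 0 := X_pow_sub_C_ne_zero m.succ_pos 1
  rw [← neg_ne_zero, neg_sub]
  simpa using (map_ne_zero_iff _ (RatFunc.algebraMap_injective ℚ)).2 h

lemma qfac_ne_zero (n : ℕ) : qfac n ≠ 0 :=
  prod_ne_zero_iff.2 fun m _ => one_sub_X_pow_succ_ne_zero m

lemma qfac_zero : qfac 0 = 1 := prod_range_zero _

lemma qfac_succ (n : ℕ) : qfac (n + 1) = qfac n * (1 - q ^ (n + 1)) :=
  prod_range_succ _ _

lemma qbinom_of_lt {n k : ℕ} (h : n < k) : qbinom n k = 0 := if_neg h.not_ge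

lemma qbinom_add_left (a b : ℕ) : qbinom (a + b) a = qfac (a + b) / (qfac a * qfac b) := by
  rw [qbinom, if_pos (Nat.le_add_right a b), Nat.add_sub_cancel_left]

lemma qbinom_zero_right (n : ℕ) : qbinom n 0 = 1 := by
  have h := qbinom_add_left 0 n
  rwa [zero_add, qfac_zero, one_mul, div_self (qfac_ne_zero n)] at h

lemma qbinom_self (n : ℕ) : qbinom n n = 1 := by
  have h := qbinom_add_left n 0
  rwa [add_zero, qfac_zero, mul_one, div_self (qfac_ne_zero n)] at h

lemma qbinom_succ_succ (n k : ℕ) :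
    qbinom (n + 1) (k + 1) = q ^ (k + 1) * qbinom n (k + 1) + qbinom n k := by
  rcases lt_trichotomy n k with h | rfl | h
  · simp [qbinom_of_lt, h, Nat.lt_succ_of_lt h]
  · simp [qbinom_self, qbinom_of_lt]
  obtain ⟨m, rfl⟩ := Nat.exists_eq_add_of_lt h
  have h1 := qbinom_add_left (k + 1) (m + 1)
  have h2 := qbinom_add_left (k + 1) m
  have h3 := qbinom_add_left k (m + 1)
  rw [show k + 1 + (m + 1) = k + m + 1 + 1 by ring] at h1
  rw [show k + 1 + m = k + m + 1 by ring] at h2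
  rw [show k + (m + 1) = k + m + 1 by ring] at h3
  rw [h1, h2, h3, qfac_succ (k + m + 1), qfac_succ k, qfac_succ m]
  have := one_sub_X_pow_succ_ne_zero k
  have := one_sub_X_pow_succ_ne_zero m
  have := qfac_ne_zero k
  have := qfac_ne_zero m
  have := qfac_ne_zero (k + m + 1)
  field_simp
  ring

noncomputable def qbinomPoly : ℕ → ℕ → ℤ[X]
  | _, 0 => 1
  | 0, _ + 1 => 0
  | n + 1, k + 1 => X ^ (k + 1) * qbinomPoly n (k + 1) + qbinomPoly n k

lemma aeval_qbinomPoly (n k : ℕ) : aeval q (qbinomPoly n k) = qbinom n k := by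
  induction n generalizing k with
  | zero => cases k <;> simp [qbinomPoly, qbinom_zero_right, qbinom_of_lt]
  | succ n ih => cases k <;> simp [qbinomPoly, qbinom_zero_right, qbinom_succ_succ, ih]

-- The truncated subtraction `p - x.2` only matters where `qbinom p x.2 = 0`.
lemma qbinom_add_eq_sum (m p k : ℕ) :
    qbinom (m + p) k =
      ∑ x ∈ antidiagonal k, q ^ (x.1 * (p - x.2)) * qbinom m x.1 * qbinom p x.2 := by
  induction p generalizing k with
  | zero =>
    rw [Nat.sum_antidiagonal_eq_sum_range_succ_mk, sum_range_succ, sum_eq_zero]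
    · simp [qbinom_zero_right]
    · intro t ht
      rw [mem_range] at ht
      rw [qbinom_of_lt (n := 0) (by omega), mul_zero]
  | succ p ih =>
    cases k with
    | zero => simp [qbinom_zero_right]
    | succ k =>
      rw [← add_assoc, qbinom_succ_succ, ih, ih, Nat.sum_antidiagonal_succ',
        Nat.sum_antidiagonal_succ']
      simp only [qbinom_zero_right, Nat.sub_zero, Nat.add_sub_add_right, qbinom_succ_succ p,
        mul_add, sum_add_distrib, mul_sum, add_assoc]
      congr 1
      · ring
      congr 1
      refine sum_congr rfl fun x hx => ?_
      rcases lt_or_ge p (x.2 + 1) with hp | hp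
      · simp [qbinom_of_lt hp]
      · rw [HasAntidiagonal.mem_antidiagonal] at hx
        have hexp : k + 1 + x.1 * (p - (x.2 + 1)) = x.1 * (p - x.2) + (x.2 + 1) := by
          obtain ⟨c, rfl⟩ := Nat.exists_eq_add_of_le hp
          rw [← hx, show x.2 + 1 + c - x.2 = c + 1 by omega, Nat.add_sub_cancel_left]
          ring
        calc q ^ (k + 1) * (q ^ (x.1 * (p - (x.2 + 1))) * qbinom m x.1 * qbinom p (x.2 + 1))
            = q ^ (k + 1 + x.1 * (p - (x.2 + 1))) * qbinom m x.1 * qbinom p (x.2 + 1) := by ring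
          _ = _ := by rw [hexp]; ring

lemma qbinom_add_mul_qbinom (j m a : ℕ) :
    qbinom (j + m) j * qbinom m a = qbinom (j + m) (j + a) * qbinom (j + a) j := by
  rcases lt_or_ge m a with h | h
  · rw [qbinom_of_lt h, qbinom_of_lt (k := j + a) (by omega), mul_zero, zero_mul]
  obtain ⟨c, rfl⟩ := Nat.exists_eq_add_of_le h
  rw [qbinom_add_left a c, qbinom_add_left j (a + c), qbinom_add_left j a, ← add_assoc,
    qbinom_add_left (j + a) c]
  have := qfac_ne_zero j
  have := qfac_ne_zero a
  have := qfac_ne_zero c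
  have := qfac_ne_zero (a + c)
  have := qfac_ne_zero (j + a)
  field_simp

lemma qbinom_mul_qbinom_eq_sum (n j k : ℕ) :
    qbinom n j * qbinom n k =
      ∑ x ∈ antidiagonal k,
        q ^ (x.1 * (j - x.2)) * qbinom (j + x.1) j * qbinom j x.2 * qbinom n (j + x.1) := by
  rcases lt_or_ge n j with h | h
  · simp [qbinom_of_lt h, qbinom_of_lt (Nat.lt_add_right _ h)]
  obtain ⟨m, rfl⟩ := Nat.exists_eq_add_of_le h
  have vandermonde := qbinom_add_eq_sum m j k
  rw [add_comm m j] at vandermonde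
  rw [vandermonde, mul_sum]
  refine sum_congr rfl fun x _ => ?_
  calc qbinom (j + m) j * (q ^ (x.1 * (j - x.2)) * qbinom m x.1 * qbinom j x.2)
      = q ^ (x.1 * (j - x.2)) * (qbinom (j + m) j * qbinom m x.1) * qbinom j x.2 := by ring
    _ = _ := by rw [qbinom_add_mul_qbinom]; ring

def IsQBinomialCombination (d : ℕ) (f : ℕ → RatFunc ℚ) : Prop :=
  ∃ P : ℕ → ℤ[X], ∀ n, f n = ∑ j ∈ range (d + 1), aeval q (P j) * qbinom n j

lemma isQBinomialCombination_zero (d : ℕ) : IsQBinomialCombination d 0 := ⟨0, by simp⟩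

lemma isQBinomialCombination_qbinom {d l : ℕ} (hl : l ≤ d) :
    IsQBinomialCombination d (fun n => qbinom n l) :=
  ⟨fun j => if j = l then 1 else 0, fun n => by simp [Nat.lt_succ_of_le hl]⟩

namespace IsQBinomialCombination

variable {d : ℕ} {f g : ℕ → RatFunc ℚ}

lemma add (hf : IsQBinomialCombination d f) (hg : IsQBinomialCombination d g) :
    IsQBinomialCombination d (f + g) := by
  obtain ⟨P, hP⟩ := hf
  obtain ⟨Q, hQ⟩ := hg
  exact ⟨P + Q, fun n => by simp [hP, hQ, add_mul, sum_add_distrib]⟩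

lemma sum {ι : Type*} (s : Finset ι) (f : ι → ℕ → RatFunc ℚ)
    (h : ∀ i ∈ s, IsQBinomialCombination d (f i)) :
    IsQBinomialCombination d (fun n => ∑ i ∈ s, f i n) := by
  rw [← Finset.sum_fn]
  exact Finset.sum_induction _ _ (fun _ _ => add) (isQBinomialCombination_zero d) h

lemma aeval_mul (p : ℤ[X]) (hf : IsQBinomialCombination d f) :
    IsQBinomialCombination d (fun n => aeval q p * f n) := by
  obtain ⟨P, hP⟩ := hf
  exact ⟨fun j => p * P j, fun n => by simp [hP, mul_sum, mul_assoc]⟩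

end IsQBinomialCombination

lemma isQBinomialCombination_qbinom_mul_qbinom {d j k : ℕ} (h : j + k ≤ d) :
    IsQBinomialCombination d (fun n => qbinom n j * qbinom n k) := by
  simp_rw [qbinom_mul_qbinom_eq_sum]
  refine .sum _ _ fun x hx => ?_
  rw [HasAntidiagonal.mem_antidiagonal] at hx
  convert (isQBinomialCombination_qbinom (d := d) (l := j + x.1) (by omega)).aeval_mul
    (X ^ (x.1 * (j - x.2)) * qbinomPoly (j + x.1) j * qbinomPoly j x.2) using 2
  simp [aeval_qbinomPoly]

lemma IsQBinomialCombination.mul_qbinom {d : ℕ} {f : ℕ → RatFunc ℚ} (k : ℕ)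
    (hf : IsQBinomialCombination d f) :
    IsQBinomialCombination (d + k) (fun n => f n * qbinom n k) := by
  obtain ⟨P, hP⟩ := hf
  simp_rw [hP, sum_mul, mul_assoc]
  refine .sum _ _ fun j hj => (isQBinomialCombination_qbinom_mul_qbinom ?_).aeval_mul (P j)
  rw [mem_range] at hj
  omega

lemma isQBinomialCombination_qbinom_pow (k r : ℕ) :
    IsQBinomialCombination (r * k) (fun n => qbinom n k ^ r) := by
  induction r with
  | zero => simpa [qbinom_zero_right] using isQBinomialCombination_qbinom (d := 0) le_rfl
  | succ r ih => simpa [pow_succ, add_one_mul] using ih.mul_qbinom k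

theorem stmt_14_general (k r : ℕ) :
    ∃ P : ℕ → Polynomial ℤ, ∀ n : ℕ,
      (qbinom n k) ^ r =
        ∑ j ∈ Finset.range (r * k + 1),
          Polynomial.aeval (RatFunc.X : RatFunc ℚ) (P j) * qbinom n j :=
  isQBinomialCombination_qbinom_pow k r

/-- $q$-analog of Statement 7: the coefficients are polynomials in `q` with
integer coefficients (viewed in `ℚ(q)` by evaluating at `q = RatFunc.X`). -/
theorem stmt_14 (k r : ℕ) (hr : 1 ≤ r) :
    ∃ P : ℕ → Polynomial ℤ, ∀ n : ℕ,
      (qbinom n k) ^ r =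
        ∑ j ∈ Finset.range (r * k + 1),
          Polynomial.aeval (RatFunc.X : RatFunc ℚ) (P j) * qbinom n j :=
  stmt_14_general k r
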